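/- arXiv:1304.5299 — 2 statements merged into one kernel-verified Lean document; each statement's English description precedes it below -/
import Mathlib

section
/- Let T0 and Tε be two transition kernels on a measurable space with respective stationary distributions S0 and Sε. Suppose T0 satisfies the contraction condition d_v(P T0, S0) ≤ η d_v(P, S0) for all probability distributions P, with a constant η ∈ [0,1), and suppose the one-step error is uniformly bounded: d_v(P T0, P Tε) ≤ Δ for all P, with Δ > 0. Then d_v(S0, Sε) ≤ Δ/(1-η). -/
/-! Stationarity of `Sε` under `Tε` and the triangle inequality give
`d(S0, Sε) ≤ d(S0, Sε T0) + d(Sε T0, Sε Tε) ≤ η d(Sε, S0) + Δ`, and `η < 1` lets one solve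
for `d(S0, Sε)`. -/

open MeasureTheory ProbabilityTheory Filter

/-- Total variation distance between two measures: supremum over sets of the
absolute difference of their (real-valued) masses. -/
noncomputable def tvDist {Ω : Type*} [MeasurableSpace Ω] (μ ν : Measure Ω) : ℝ :=
  ⨆ A : Set Ω, |(μ A).toReal - (ν A).toReal|

section TotalVariation

variable {Ω : Type*} [MeasurableSpace Ω]

lemma bddAbove_range_abs_toReal_measure_sub (μ ν : Measure Ω) [IsFiniteMeasure μ]
    [IsFiniteMeasure ν] :
    BddAbove (Set.range fun A : Set Ω => |(μ A).toReal - (ν A).toReal|) := by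
  refine ⟨(μ Set.univ).toReal + (ν Set.univ).toReal, ?_⟩
  rintro _ ⟨A, rfl⟩
  have hμ : (μ A).toReal ≤ (μ Set.univ).toReal :=
    ENNReal.toReal_mono (measure_ne_top μ _) (measure_mono (Set.subset_univ A))
  have hν : (ν A).toReal ≤ (ν Set.univ).toReal :=
    ENNReal.toReal_mono (measure_ne_top ν _) (measure_mono (Set.subset_univ A))
  rw [abs_sub_le_iff]
  constructor <;> linarith [ENNReal.toReal_nonneg (a := μ A), ENNReal.toReal_nonneg (a := ν A)]

lemma tvDist_comm (μ ν : Measure Ω) : tvDist μ ν = tvDist ν μ := by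
  simp only [tvDist, abs_sub_comm]

lemma tvDist_triangle (μ ν ρ : Measure Ω) [IsFiniteMeasure μ] [IsFiniteMeasure ν]
    [IsFiniteMeasure ρ] : tvDist μ ν ≤ tvDist μ ρ + tvDist ρ ν :=
  ciSup_le fun A => (abs_sub_le _ _ _).trans <|
    add_le_add (le_ciSup (bddAbove_range_abs_toReal_measure_sub μ ρ) A)
      (le_ciSup (bddAbove_range_abs_toReal_measure_sub ρ ν) A)

end TotalVariation

theorem stmt0_general {Ω : Type*} [MeasurableSpace Ω]
    (T0 Tε : ProbabilityTheory.Kernel Ω Ω) [IsMarkovKernel T0]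
    (S0 Sε : Measure Ω) [IsProbabilityMeasure S0] [IsProbabilityMeasure Sε]
    (η Δ : ℝ) (hη1 : η < 1)
    (hstatε : Sε.bind Tε = Sε)
    (hcontr : ∀ P : Measure Ω, IsProbabilityMeasure P →
      tvDist (P.bind T0) S0 ≤ η * tvDist P S0)
    (herr : ∀ P : Measure Ω, IsProbabilityMeasure P →
      tvDist (P.bind T0) (P.bind Tε) ≤ Δ) :
    tvDist S0 Sε ≤ Δ / (1 - η) := by
  have : IsProbabilityMeasure (Sε.bind T0) :=
    isProbabilityMeasure_bind T0.measurable.aemeasurable (.of_forall fun _ => inferInstance)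
  have hstep : tvDist S0 Sε ≤ η * tvDist S0 Sε + Δ :=
    calc tvDist S0 Sε ≤ tvDist S0 (Sε.bind T0) + tvDist (Sε.bind T0) Sε :=
          tvDist_triangle _ _ _
      _ ≤ η * tvDist S0 Sε + Δ := by
          gcongr
          · rw [tvDist_comm, tvDist_comm S0]
            exact hcontr Sε inferInstance
          · simpa only [hstatε] using herr Sε inferInstance
  rw [le_div_iff₀ (sub_pos.mpr hη1)]
  linarith

/-- If the exact kernel `T0` contracts towards its stationary distribution `S0`
at rate `η < 1`, and the approximate kernel `Tε` is uniformly within `Δ` of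
`T0` in one step, then the stationary distribution `Sε` of `Tε` (to which the
iterates of `Tε` converge) satisfies `d_v(S0, Sε) ≤ Δ / (1 - η)`. -/
theorem stmt0 {Ω : Type*} [MeasurableSpace Ω]
    (T0 Tε : ProbabilityTheory.Kernel Ω Ω) [IsMarkovKernel T0] [IsMarkovKernel Tε]
    (S0 Sε : Measure Ω) [IsProbabilityMeasure S0] [IsProbabilityMeasure Sε]
    (η Δ : ℝ) (hη0 : 0 ≤ η) (hη1 : η < 1) (hΔ : 0 < Δ)
    (hstat0 : S0.bind T0 = S0)
    (hstatε : Sε.bind Tε = Sε)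
    (hcontr : ∀ P : Measure Ω, IsProbabilityMeasure P →
      tvDist (P.bind T0) S0 ≤ η * tvDist P S0)
    (herr : ∀ P : Measure Ω, IsProbabilityMeasure P →
      tvDist (P.bind T0) (P.bind Tε) ≤ Δ)
    (hconv : ∀ P : Measure Ω, IsProbabilityMeasure P →
      Tendsto (fun t : ℕ => tvDist ((fun μ : Measure Ω => μ.bind Tε)^[t] P) Sε)
        atTop (nhds 0)) :
    tvDist S0 Sε ≤ Δ / (1 - η) :=
  stmt0_general T0 Tε S0 Sε η Δ hη1 hstatε hcontr herr
end

section
/- If the exact Gibbs sampler transition kernel T0 on {0,1}^D satisfies d_v(P T0, S0) ≤ η d_v(P, S0) for all P with η ∈ [0,1) (Dobrushin-type contraction), and an approximate Gibbs sampler with per-site conditional error at most Δ_max has stationary distribution Sε, then d_v(S0, Sε) ≤ Δ_max/(1−η). -/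
open Filter

open Classical in
/-- The single-site Gibbs transition kernel on `{0,1}^D`. -/
noncomputable def gibbsKernel (D : ℕ) (pc : Fin D → (Fin D → Bool) → ℝ)
    (i : Fin D) (x y : Fin D → Bool) : ℝ :=
  if ∀ j, j ≠ i → x j = y j then (if y i then pc i y else 1 - pc i y) else 0

/-- The random-scan Gibbs transition kernel on `{0,1}^D`. -/
noncomputable def gibbsScanKernel (D : ℕ) (pc : Fin D → (Fin D → Bool) → ℝ)
    (x y : Fin D → Bool) : ℝ :=
  (1 / D : ℝ) * ∑ i, gibbsKernel D pc i x y

/-- Applying a transition kernel on the finite space `{0,1}^D` to a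
distribution (represented as a probability vector). -/
noncomputable def applyKernel (D : ℕ) (T : (Fin D → Bool) → (Fin D → Bool) → ℝ)
    (P : (Fin D → Bool) → ℝ) : (Fin D → Bool) → ℝ :=
  fun y => ∑ x, P x * T x y

/-- Total variation distance on the finite space `{0,1}^D`. -/
noncomputable def tvFin (D : ℕ) (P Q : (Fin D → Bool) → ℝ) : ℝ :=
  (1 / 2) * ∑ x, |P x - Q x|

/-!
The approximate stationary distribution `Sε` is moved by the exact kernel `T0` by at most
`Δmax` in total variation, because the two single-site kernels differ only on the two
configurations that agree with `x` off site `i`, and there by at most `Δmax` each. Hence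
`d(Sε, S0) ≤ d(Sε, Sε T0) + d(Sε T0, S0) ≤ Δmax + η d(Sε, S0)`, and rearranging gives the bound.
-/

namespace tvFin

variable {D : ℕ}

theorem comm (P Q : (Fin D → Bool) → ℝ) : tvFin D P Q = tvFin D Q P := by
  unfold tvFin
  simp only [abs_sub_comm]

theorem triangle (P Q R : (Fin D → Bool) → ℝ) :
    tvFin D P R ≤ tvFin D P Q + tvFin D Q R := by
  unfold tvFin
  rw [← mul_add, ← Finset.sum_add_distrib]
  gcongr with x
  exact abs_sub_le _ _ _

theorem applyKernel_le {T T' : (Fin D → Bool) → (Fin D → Bool) → ℝ} {δ : ℝ}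
    (hT : ∀ x, ∑ y, |T x y - T' x y| ≤ 2 * δ)
    {P : (Fin D → Bool) → ℝ} (hP0 : ∀ x, 0 ≤ P x) (hP1 : ∑ x, P x = 1) :
    tvFin D (applyKernel D T P) (applyKernel D T' P) ≤ δ := by
  have hrow : ∀ y, |applyKernel D T P y - applyKernel D T' P y|
      ≤ ∑ x, P x * |T x y - T' x y| := fun y => by
    unfold applyKernel
    rw [← Finset.sum_sub_distrib]
    refine (Finset.abs_sum_le_sum_abs _ _).trans (le_of_eq ?_)
    simp only [← mul_sub, abs_mul, abs_of_nonneg (hP0 _)]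
  have hsum : ∑ y, |applyKernel D T P y - applyKernel D T' P y| ≤ 2 * δ :=
    calc ∑ y, |applyKernel D T P y - applyKernel D T' P y|
        ≤ ∑ y, ∑ x, P x * |T x y - T' x y| := Finset.sum_le_sum fun y _ => hrow y
      _ = ∑ x, P x * ∑ y, |T x y - T' x y| := by
          rw [Finset.sum_comm]; simp only [Finset.mul_sum]
      _ ≤ ∑ x, P x * (2 * δ) := by gcongr with x; exacts [hP0 x, hT x]
      _ = 2 * δ := by rw [← Finset.sum_mul, hP1, one_mul]
  unfold tvFin
  linarith

end tvFin

theorem filter_forall_ne_eq_image_update {D : ℕ} (i : Fin D) (x : Fin D → Bool) :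
    Finset.univ.filter (fun y => ∀ j, j ≠ i → x j = y j)
      = Finset.univ.image (Function.update x i) := by
  ext y
  simp only [Finset.mem_filter, Finset.mem_univ, true_and, Finset.mem_image]
  constructor
  · intro h
    refine ⟨y i, funext fun j => ?_⟩
    by_cases hj : j = i
    · subst hj; simp
    · rw [Function.update_of_ne hj, h j hj]
  · rintro ⟨b, rfl⟩ j hj
    rw [Function.update_of_ne hj]

theorem sum_abs_sub_gibbsKernel_le {D : ℕ} {pc pcε : Fin D → (Fin D → Bool) → ℝ} {Δmax : ℝ}
    (hΔ : ∀ i x, |pcε i x - pc i x| ≤ Δmax) (i : Fin D) (x : Fin D → Bool) :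
    ∑ y, |gibbsKernel D pcε i x y - gibbsKernel D pc i x y| ≤ 2 * Δmax := by
  classical
  have hpoint : ∀ y, |gibbsKernel D pcε i x y - gibbsKernel D pc i x y|
      ≤ if ∀ j, j ≠ i → x j = y j then Δmax else 0 := fun y => by
    unfold gibbsKernel
    split_ifs
    · exact hΔ i y
    · rw [sub_sub_sub_cancel_left, abs_sub_comm]; exact hΔ i y
    · simp
  calc ∑ y, |gibbsKernel D pcε i x y - gibbsKernel D pc i x y|
      ≤ ∑ y, if ∀ j, j ≠ i → x j = y j then Δmax else 0 :=
        Finset.sum_le_sum fun y _ => hpoint y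
    _ = 2 * Δmax := by
        rw [← Finset.sum_filter, filter_forall_ne_eq_image_update, Finset.sum_const,
          Finset.card_image_of_injective _ (Function.update_injective x i)]
        simp

theorem sum_abs_sub_gibbsScanKernel_le {D : ℕ} (hD : 0 < D)
    {pc pcε : Fin D → (Fin D → Bool) → ℝ} {Δmax : ℝ}
    (hΔ : ∀ i x, |pcε i x - pc i x| ≤ Δmax) (x : Fin D → Bool) :
    ∑ y, |gibbsScanKernel D pcε x y - gibbsScanKernel D pc x y| ≤ 2 * Δmax := by
  have hD' : (0 : ℝ) < D := by exact_mod_cast hD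
  calc ∑ y, |gibbsScanKernel D pcε x y - gibbsScanKernel D pc x y|
      = (1 / D : ℝ) * ∑ y, |∑ i, (gibbsKernel D pcε i x y - gibbsKernel D pc i x y)| := by
        rw [Finset.mul_sum]
        refine Finset.sum_congr rfl fun y _ => ?_
        rw [gibbsScanKernel, gibbsScanKernel, ← mul_sub, ← Finset.sum_sub_distrib, abs_mul,
          abs_of_pos (one_div_pos.2 hD')]
    _ ≤ (1 / D : ℝ) * ∑ i, ∑ y, |gibbsKernel D pcε i x y - gibbsKernel D pc i x y| := by
        rw [Finset.sum_comm (γ := Fin D)]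
        gcongr with y
        exact Finset.abs_sum_le_sum_abs _ _
    _ ≤ (1 / D : ℝ) * ∑ _i : Fin D, 2 * Δmax := by
        gcongr with i
        exact sum_abs_sub_gibbsKernel_le hΔ i x
    _ = 2 * Δmax := by
        rw [Finset.sum_const, Finset.card_univ, Fintype.card_fin, nsmul_eq_mul]
        field_simp

theorem stmt14_general (D : ℕ) (hD : 0 < D)
    (pc pcε : Fin D → (Fin D → Bool) → ℝ)
    (Δmax : ℝ) (hΔ : ∀ i x, |pcε i x - pc i x| ≤ Δmax)
    (η : ℝ) (hη1 : η < 1)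
    (S0 Sε : (Fin D → Bool) → ℝ)
    (hSε0 : ∀ x, 0 ≤ Sε x) (hSε1 : ∑ x, Sε x = 1)
    (hstatε : applyKernel D (gibbsScanKernel D pcε) Sε = Sε)
    (hcontr : ∀ P : (Fin D → Bool) → ℝ, (∀ x, 0 ≤ P x) → ∑ x, P x = 1 →
      tvFin D (applyKernel D (gibbsScanKernel D pc) P) S0 ≤ η * tvFin D P S0) :
    tvFin D S0 Sε ≤ Δmax / (1 - η) := by
  have hstep : tvFin D Sε (applyKernel D (gibbsScanKernel D pc) Sε) ≤ Δmax := by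
    simpa only [hstatε] using
      tvFin.applyKernel_le (sum_abs_sub_gibbsScanKernel_le hD hΔ) hSε0 hSε1
  have hcontrε := hcontr Sε hSε0 hSε1
  have htri := tvFin.triangle Sε (applyKernel D (gibbsScanKernel D pc) Sε) S0
  rw [tvFin.comm, le_div_iff₀ (sub_pos.2 hη1)]
  linarith

/-- If the exact Gibbs sampler kernel `T0` on `{0,1}^D` contracts towards its
stationary distribution `S0` at rate `η ∈ [0,1)`, and the approximate Gibbs
sampler (per-site conditional error at most `Δmax`) has stationary
distribution `Sε` (to which its iterates converge), then
`d_v(S0, Sε) ≤ Δmax/(1−η)`. -/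
theorem stmt14 (D : ℕ) (hD : 0 < D)
    (pc pcε : Fin D → (Fin D → Bool) → ℝ)
    (hpc : ∀ i x, pc i x ∈ Set.Icc (0 : ℝ) 1)
    (hpcε : ∀ i x, pcε i x ∈ Set.Icc (0 : ℝ) 1)
    (hpcdep : ∀ i x y, (∀ j, j ≠ i → x j = y j) → pc i x = pc i y)
    (hpcεdep : ∀ i x y, (∀ j, j ≠ i → x j = y j) → pcε i x = pcε i y)
    (Δmax : ℝ) (hΔ : ∀ i x, |pcε i x - pc i x| ≤ Δmax)
    (η : ℝ) (hη0 : 0 ≤ η) (hη1 : η < 1)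
    (S0 Sε : (Fin D → Bool) → ℝ)
    (hS00 : ∀ x, 0 ≤ S0 x) (hS01 : ∑ x, S0 x = 1)
    (hSε0 : ∀ x, 0 ≤ Sε x) (hSε1 : ∑ x, Sε x = 1)
    (hstat0 : applyKernel D (gibbsScanKernel D pc) S0 = S0)
    (hstatε : applyKernel D (gibbsScanKernel D pcε) Sε = Sε)
    (hcontr : ∀ P : (Fin D → Bool) → ℝ, (∀ x, 0 ≤ P x) → ∑ x, P x = 1 →
      tvFin D (applyKernel D (gibbsScanKernel D pc) P) S0 ≤ η * tvFin D P S0)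
    (hconv : ∀ P : (Fin D → Bool) → ℝ, (∀ x, 0 ≤ P x) → ∑ x, P x = 1 →
      Tendsto (fun t : ℕ =>
          tvFin D ((applyKernel D (gibbsScanKernel D pcε))^[t] P) Sε)
        atTop (nhds 0)) :
    tvFin D S0 Sε ≤ Δmax / (1 - η) :=
  stmt14_general D hD pc pcε Δmax hΔ η hη1 S0 Sε hSε0 hSε1 hstatε hcontr
end
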